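/- Every scale-time solver whose update rule is a linear combination x̄_{r_{i+1}} = Σ_{j=0}^{i} ā_{ij} x̄_{r_j} + Σ_{j=0}^{i} b̄_{ij} ū_{r_j}(x̄_{r_j}) of transformed iterates and transformed velocities is a non-stationary solver in the original variables: there exist coefficients a_{ij}, b_{ij} such that x_{t_{i+1}} = Σ_{j=0}^{i} a_{ij} x_{t_j} + Σ_{j=0}^{i} b_{ij} u_{t_j}(x_{t_j}), with a_{ij} = (ā_{ij} s_j + b̄_{ij} ṡ_j)/s_{i+1} and b_{ij} = b̄_{ij} ṫ_j s_j / s_{i+1}. -/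

import Mathlib

open Finset

section

variable {K E : Type*} [Field K] [AddCommGroup E] [Module K E]

/-- On the transformed trajectory `x̄ = s • x`, the transformed velocity
`ū(x̄) = (ṡ/s) x̄ + c • u(x̄/s)` (with `c = ṫ s`) reads `ṡ • x + c • u x`. -/
theorem div_smul_smul_add_smul_inv_smul_smul {s : K} (hs : s ≠ 0) (s' c : K) (f : E → E)
    (x : E) : (s' / s) • (s • x) + c • f (s⁻¹ • (s • x)) = s' • x + c • f x := by
  rw [smul_smul, div_mul_cancel₀ s' hs, inv_smul_smul₀ hs]

theorem sum_smul_smul_add_sum_smul_add_smul {ι : Type*} (S : Finset ι)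
    (a b s s' c : ι → K) (x v : ι → E) :
    ∑ j ∈ S, a j • (s j • x j) + ∑ j ∈ S, b j • (s' j • x j + c j • v j)
      = ∑ j ∈ S, (a j * s j + b j * s' j) • x j + ∑ j ∈ S, (b j * c j) • v j := by
  simp only [smul_add, smul_smul, add_smul, sum_add_distrib]
  abel

theorem eq_sum_div_smul_add_sum_div_smul_of_smul_eq {ι : Type*} (S : Finset ι) {σ : K}
    (hσ : σ ≠ 0) {y : E} (α β : ι → K) (x v : ι → E)
    (h : σ • y = ∑ j ∈ S, α j • x j + ∑ j ∈ S, β j • v j) :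
    y = ∑ j ∈ S, (α j / σ) • x j + ∑ j ∈ S, (β j / σ) • v j := by
  rw [← inv_smul_smul₀ hσ y, h, smul_add, smul_sum, smul_sum]
  simp only [smul_smul, div_eq_inv_mul]

end

/-- Scale-Time ⊆ Non-Stationary: a scale-time update rule in the barred variables
`x̄_{r_{i+1}} = Σ_j ā_{ij} x̄_{r_j} + Σ_j b̄_{ij} ū_{r_j}(x̄_{r_j})` yields a non-stationary
update rule in the original variables with coefficients
`a_{ij} = (ā_{ij} s_j + b̄_{ij} ṡ_j)/s_{i+1}` and `b_{ij} = b̄_{ij} ṫ_j s_j / s_{i+1}`. -/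
theorem scale_time_subset_non_stationary {d : ℕ}
    (u : ℝ → (Fin d → ℝ) → (Fin d → ℝ)) (x : ℝ → (Fin d → ℝ))
    (s t s' t' : ℝ → ℝ) (hspos : ∀ ρ, 0 < s ρ)
    (r : ℕ → ℝ) (i : ℕ) (abar bbar : Fin (i + 1) → ℝ)
    (hupd : s (r (i + 1)) • x (t (r (i + 1)))
      = ∑ j : Fin (i + 1), abar j • (s (r j) • x (t (r j)))
        + ∑ j : Fin (i + 1), bbar j •
            ((s' (r j) / s (r j)) • (s (r j) • x (t (r j)))
              + (t' (r j) * s (r j)) • u (t (r j)) ((s (r j))⁻¹ • (s (r j) • x (t (r j)))))) :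
    x (t (r (i + 1)))
      = ∑ j : Fin (i + 1),
          ((abar j * s (r j) + bbar j * s' (r j)) / s (r (i + 1))) • x (t (r j))
        + ∑ j : Fin (i + 1),
          (bbar j * t' (r j) * s (r j) / s (r (i + 1))) • u (t (r j)) (x (t (r j))) := by
  have hs : ∀ ρ, s ρ ≠ 0 := fun ρ => (hspos ρ).ne'
  simp only [div_smul_smul_add_smul_inv_smul_smul (hs _)] at hupd
  rw [sum_smul_smul_add_sum_smul_add_smul] at hupd
  simpa only [mul_assoc] using
    eq_sum_div_smul_add_sum_div_smul_of_smul_eq _ (hs _) _ _ _ _ hupd
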